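/- arXiv:1903.07951 — 3 statements merged into one kernel-verified Lean document; each statement's English description precedes it below -/
import Mathlib

section
/- Every polyhedral poset is lower saturated: if P is a pointed poset such that P_{≤x} is a lower semilattice for all x, then for any two elements x, y admitting a common upper bound, the meet x ∧ y exists and satisfies V(x ∧ y) = V(x) ∩ V(y), where V(z) denotes the set of minimal nonbase elements below z. -/
/-- The set of vertices of `x`: minimal non-basepoint elements (atoms) below `x`. -/
def Vset {P : Type*} [PartialOrder P] [OrderBot P] (x : P) : Set P :=
  {v | IsAtom v ∧ v ≤ x}

/-- The lower interval `P_{≤ x}` is a lower semilattice: any two elements have a meet. -/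
def IsLowerSemilatticeBelow {P : Type*} [PartialOrder P] (x : P) : Prop :=
  ∀ a b : {p : P // p ≤ x}, ∃ m : {p : P // p ≤ x}, IsGLB {a, b} m

/-- A pointed poset is polyhedral if each lower interval is a lower semilattice. -/
def Polyhedral (P : Type*) [PartialOrder P] : Prop :=
  ∀ x : P, IsLowerSemilatticeBelow x

/-- Every polyhedral poset is lower saturated: for any two elements with a common
upper bound, the meet exists and its vertex set is the intersection of vertex sets. -/
theorem polyhedral_lower_saturated
    (P : Type*) [PartialOrder P] [OrderBot P] [Fintype P]
    (hP : Polyhedral P) :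
    ∀ x y : P, (∃ z, x ≤ z ∧ y ≤ z) →
      ∃ m, IsGLB ({x, y} : Set P) m ∧ Vset m = Vset x ∩ Vset y := by
  rintro x y ⟨z, hxz, hyz⟩
  obtain ⟨⟨m, hmz⟩, hm⟩ := hP z ⟨x, hxz⟩ ⟨y, hyz⟩
  have hmx : m ≤ x := hm.1 (Or.inl rfl)
  have hmy : m ≤ y := hm.1 (Or.inr rfl)
  have hglb : IsGLB ({x, y} : Set P) m := by
    constructor
    · rintro w (rfl | rfl) <;> assumption
    · intro w hw
      have hwx : w ≤ x := hw (Or.inl rfl)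
      have hwy : w ≤ y := hw (Or.inr rfl)
      have : (⟨w, hwx.trans hxz⟩ : {p : P // p ≤ z}) ≤ ⟨m, hmz⟩ := by
        apply hm.2
        rintro u (rfl | rfl) <;> simpa [Subtype.mk_le_mk]
      exact this
  refine ⟨m, hglb, ?_⟩
  ext v
  constructor
  · rintro ⟨hv, hvm⟩
    exact ⟨⟨hv, hvm.trans hmx⟩, ⟨hv, hvm.trans hmy⟩⟩
  · rintro ⟨⟨hv, hvx⟩, ⟨_, hvy⟩⟩
    refine ⟨hv, hglb.2 ?_⟩
    rintro u (rfl | rfl) <;> assumption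
end

section
/- Let P be a finite pointed poset and F : P^op → Ab a functor admitting a lower factoring section S. Then F is acyclic: lim^n_P F = 0 for all n > 0. -/
open CategoryTheory Opposite

universe u

variable {C : Type u} [SmallCategory C]

/-- `n`-cochains of a functor `F : Cᵒᵖ ⥤ Ab`: a value in `F(x₀)` for every chain
`x₀ → x₁ → ⋯ → xₙ` of composable morphisms in `C`. -/
def Cochain (F : Cᵒᵖ ⥤ AddCommGrpCat.{u}) (n : ℕ) : Type u :=
  ∀ c : ComposableArrows C n, F.obj (op (c.obj 0))

noncomputable instance (F : Cᵒᵖ ⥤ AddCommGrpCat.{u}) (n : ℕ) : AddCommGroup (Cochain F n) :=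
  Pi.addCommGroup

/-- The `k`-th face of a chain of `n+1` composable arrows. -/
def faceChain {n : ℕ} (k : Fin (n + 2)) (f : ComposableArrows C (n + 1)) :
    ComposableArrows C n :=
  (Fin.succAboveOrderEmb k).toOrderHom.monotone.functor ⋙ f

/-- The simplicial differential of the standard cochain complex computing higher limits.
(For `k ≥ 1` the `F.map` factor below is the identity, so this is the usual alternating sum.) -/
noncomputable def delta {n : ℕ} (F : Cᵒᵖ ⥤ AddCommGrpCat.{u}) (φ : Cochain F n) :
    Cochain F (n + 1) :=
  fun f => ∑ k : Fin (n + 2),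
    ((-1 : ℤ) ^ (k : ℕ)) •
      (F.map (f.map (homOfLE (Fin.zero_le ((Fin.succAboveOrderEmb k) 0)))).op
        (φ (faceChain k f)))

variable {P : Type u} [PartialOrder P]

/-- A section of a functor `F : Pᵒᵖ ⥤ Ab` on a poset: a covariant functor agreeing with `F`
on objects whose structure maps are right inverses for those of `F`. -/
structure FunctorSection (F : Pᵒᵖ ⥤ AddCommGrpCat.{u}) where
  sec : ∀ {p q : P}, p ≤ q → (F.obj (op p) ⟶ F.obj (op q))
  sec_refl : ∀ p : P, sec (le_refl p) = 𝟙 _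
  sec_comp : ∀ {p q r : P} (h1 : p ≤ q) (h2 : q ≤ r), sec (h1.trans h2) = sec h1 ≫ sec h2
  is_section : ∀ {p q : P} (h : p ≤ q), sec h ≫ F.map (homOfLE h).op = 𝟙 _

/-- A section `S` of `F` is lower factoring if for every `x, y` with common upper bound `z`
there is a common lower bound `w` with `F(ι_{y,z}) ∘ S(ι_{x,z}) = S(ι_{w,y}) ∘ F(ι_{w,x})`. -/
def LowerFactoring (F : Pᵒᵖ ⥤ AddCommGrpCat.{u}) (S : FunctorSection F) : Prop :=
  ∀ (x y z : P) (hx : x ≤ z) (hy : y ≤ z),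
    ∃ (w : P) (hwx : w ≤ x) (hwy : w ≤ y),
      S.sec hx ≫ F.map (homOfLE hy).op = F.map (homOfLE hwx).op ≫ S.sec hwy

/-!
Say that a cochain vanishes on a set `D ⊆ P` if all its values, restricted to any `v ∈ D`
below the first vertex of the chain, are zero. Every cochain vanishes on `∅`, and a cochain
vanishing on all of `P` is zero. If a cocycle `ψ` vanishes on a lower set `D` and `p` is a
minimal element outside `D`, let `h ψ (c) := S(p ≤ c₀) (ψ (p ≤ c₀ ≤ ⋯ ≤ cₙ))` (zero when
`p ≰ c₀`). The cocycle identity of `ψ` on the chain `p ≤ c₀ ≤ ⋯` shows that `ψ - δ(h ψ)`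
vanishes at `p`; lower factoring rewrites the restriction of `S(p ≤ c₀)` to `v ∈ D` as
`S(w ≤ v)` after a restriction to some `w ≤ p, v`, which lies in `D`, so `h ψ` and hence
`δ(h ψ)` still vanish on `D`. Adding the points of the finite poset one at a time therefore
turns `ψ` into `0` by subtracting coboundaries.
-/

theorem Fin.succ_succAbove_succAbove {n : ℕ} {i j : Fin (n + 2)} (h : i ≤ j) (k : Fin (n + 1)) :
    j.succ.succAbove (i.succAbove k) = i.castSucc.succAbove (j.succAbove k) :=
  congrArg (fun f => f.toOrderHom k) (SimplexCategory.δ_comp_δ h)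

theorem Fin.sum_sum_eq_zero_of_pairing {M : Type*} [AddCommGroup M] {n : ℕ}
    (f : Fin (n + 3) → Fin (n + 2) → M)
    (hf : ∀ i j : Fin (n + 2), i ≤ j → f j.succ i + f i.castSucc j = 0) :
    ∑ k, ∑ l, f k l = 0 := by
  rw [← Finset.sum_product']
  -- `τ` exchanges `(j.succ, i)` and `(i.castSucc, j)` for `i ≤ j`
  let τ : Fin (n + 3) × Fin (n + 2) → Fin (n + 3) × Fin (n + 2) := fun p =>
    if h : (p.1 : ℕ) ≤ p.2 then (p.2.succ, ⟨p.1, by omega⟩)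
    else (p.2.castSucc, ⟨p.1 - 1, by omega⟩)
  refine Finset.sum_ninvolution τ (fun ⟨k, l⟩ => ?_) (fun ⟨k, l⟩ _ => ?_)
    (fun _ => Finset.mem_univ _) (fun ⟨k, l⟩ => ?_)
  all_goals by_cases h : (k : ℕ) ≤ l <;> simp only [τ, h, ↓reduceDIte]
  · rw [add_comm]
    convert hf ⟨k, by omega⟩ l h
    exact Fin.ext rfl
  · convert hf l ⟨k - 1, by omega⟩ (by simp [Fin.le_def]; omega) using 3
    ext; simp; omega
  all_goals simp only [Prod.ext_iff, Fin.ext_iff, ne_eq, Fin.val_succ, Fin.val_castSucc] at *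
  all_goals (try split_ifs) <;> simp <;> omega

namespace Cochain

variable (F : Cᵒᵖ ⥤ AddCommGrpCat.{u})

@[simp] lemma sub_apply {n : ℕ} (φ χ : Cochain F n) (c : ComposableArrows C n) :
    (φ - χ) c = φ c - χ c := rfl

@[simp] lemma zero_apply {n : ℕ} (c : ComposableArrows C n) : (0 : Cochain F n) c = 0 := rfl

noncomputable def subchainValue {m n : ℕ} (φ : Cochain F n) (c : ComposableArrows C m)
    {g : Fin (n + 1) → Fin (m + 1)} (hg : Monotone g) : F.obj (op (c.obj 0)) :=
  F.map (c.map (homOfLE (Fin.zero_le (g 0)))).op (φ (hg.functor ⋙ c))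

variable {F}

lemma subchainValue_congr {m n : ℕ} (φ : Cochain F n) (c : ComposableArrows C m)
    {g g' : Fin (n + 1) → Fin (m + 1)} (h : g = g') (hg : Monotone g) (hg' : Monotone g') :
    subchainValue F φ c hg = subchainValue F φ c hg' := by
  subst h; rfl

lemma map_subchainValue {l m n : ℕ} (φ : Cochain F n) (c : ComposableArrows C l)
    {g : Fin (m + 1) → Fin (l + 1)} {g' : Fin (n + 1) → Fin (m + 1)}
    (hg : Monotone g) (hg' : Monotone g') :
    F.map (c.map (homOfLE (Fin.zero_le (g 0)))).op (subchainValue F φ (hg.functor ⋙ c) hg') =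
      subchainValue F φ c (hg.comp hg') := by
  dsimp only [subchainValue]
  erw [← ConcreteCategory.comp_apply, ← F.map_comp, ← op_comp, ← c.map_comp]
  rfl

lemma delta_eq_sum_subchainValue {n : ℕ} (φ : Cochain F n) (c : ComposableArrows C (n + 1)) :
    delta F φ c = ∑ k : Fin (n + 2),
      ((-1 : ℤ) ^ (k : ℕ)) • subchainValue F φ c (Fin.strictMono_succAbove k).monotone :=
  rfl

end Cochain

open Cochain

section Differential

variable (F : Cᵒᵖ ⥤ AddCommGrpCat.{u})

lemma delta_add {n : ℕ} (φ χ : Cochain F n) : delta F (φ + χ) = delta F φ + delta F χ := by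
  funext c
  refine (Finset.sum_congr rfl fun k _ => ?_).trans Finset.sum_add_distrib
  rw [← smul_add]
  exact congrArg _ (map_add _ _ _)

lemma delta_sub {n : ℕ} (φ χ : Cochain F n) : delta F (φ - χ) = delta F φ - delta F χ := by
  rw [eq_sub_iff_add_eq, ← delta_add, sub_add_cancel]

lemma delta_zero {n : ℕ} : delta F (0 : Cochain F n) = 0 := by
  simpa using delta_sub F (0 : Cochain F n) 0

lemma delta_delta_apply {n : ℕ} (φ : Cochain F n) (c : ComposableArrows C (n + 2)) :
    delta F (delta F φ) c = ∑ k : Fin (n + 3), ∑ l : Fin (n + 2),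
      ((-1 : ℤ) ^ (k : ℕ) * (-1) ^ (l : ℕ)) • subchainValue F φ c
        ((Fin.strictMono_succAbove k).monotone.comp (Fin.strictMono_succAbove l).monotone) := by
  rw [delta_eq_sum_subchainValue]
  refine Finset.sum_congr rfl fun k _ => ?_
  rw [subchainValue, delta_eq_sum_subchainValue]
  erw [map_sum]
  rw [Finset.smul_sum]
  refine Finset.sum_congr rfl fun l _ => ?_
  erw [map_zsmul, map_subchainValue]
  rw [smul_smul]

lemma delta_delta {n : ℕ} (φ : Cochain F n) : delta F (delta F φ) = 0 := by
  funext c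
  rw [delta_delta_apply]
  refine Fin.sum_sum_eq_zero_of_pairing _ fun i j hij => ?_
  rw [subchainValue_congr φ c (funext (Fin.succ_succAbove_succAbove hij)) _
    ((Fin.strictMono_succAbove _).monotone.comp (Fin.strictMono_succAbove _).monotone), ← add_smul]
  convert zero_smul ℤ _
  simp only [Fin.val_succ, Fin.val_castSucc, pow_succ]
  ring

end Differential

lemma CategoryTheory.ComposableArrows.ext_of_obj_eq {n : ℕ} {c₁ c₂ : ComposableArrows P n}
    (h : ∀ i, c₁.obj i = c₂.obj i) : c₁ = c₂ :=
  Functor.ext h fun _ _ _ => Subsingleton.elim _ _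

open ComposableArrows

lemma faceChain_obj {n : ℕ} (k : Fin (n + 2)) (c : ComposableArrows C (n + 1)) (i : Fin (n + 1)) :
    (faceChain k c).obj i = c.obj (k.succAbove i) :=
  rfl

lemma obj_zero_le_faceChain {n : ℕ} (c : ComposableArrows P (n + 1)) (k : Fin (n + 2)) :
    c.obj 0 ≤ (faceChain k c).obj 0 :=
  leOfHom (c.map (homOfLE (Fin.zero_le _)))

lemma faceChain_zero_precomp {n : ℕ} (c : ComposableArrows P (n + 1)) {p : P}
    (h : p ≤ c.obj 0) : faceChain 0 (c.precomp (homOfLE h)) = c :=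
  ext_of_obj_eq fun i => by
    rw [faceChain_obj, Fin.zero_succAbove]
    rfl

lemma faceChain_succ_precomp {n : ℕ} (c : ComposableArrows P (n + 1)) {p : P} (h : p ≤ c.obj 0)
    (k : Fin (n + 2)) :
    faceChain k.succ (c.precomp (homOfLE h)) =
      (faceChain k c).precomp (homOfLE (h.trans (obj_zero_le_faceChain c k))) :=
  ext_of_obj_eq fun i => by
    rw [faceChain_obj]
    cases i using Fin.cases with
    | zero => rw [Fin.succ_succAbove_zero]; rfl
    | succ i => rw [Fin.succ_succAbove_succ]; rfl

section Restriction

variable (F : Pᵒᵖ ⥤ AddCommGrpCat.{u})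

def res {p q : P} (h : p ≤ q) : F.obj (op q) ⟶ F.obj (op p) :=
  F.map (homOfLE h).op

variable {F}

/-- `ψ` on the chain `p ≤ c₀ ≤ ⋯ ≤ cₙ`, typed as an element of `F(p)` on the nose (not of
`F((c.precomp _).obj 0)`), so that sums of such values typecheck syntactically. -/
def Cochain.precompValue {n : ℕ} (ψ : Cochain F (n + 1)) (c : ComposableArrows P n) {p : P}
    (h : p ≤ c.obj 0) : F.obj (op p) :=
  ψ (c.precomp (homOfLE h))

lemma res_res {p q r : P} (h₁ : p ≤ q) (h₂ : q ≤ r) (a : F.obj (op r)) :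
    res F h₁ (res F h₂ a) = res F (h₁.trans h₂) a := by
  rw [res, res, res, ← ConcreteCategory.comp_apply, ← F.map_comp]
  rfl

lemma res_refl {p : P} (a : F.obj (op p)) : res F le_rfl a = a := by
  rw [res, show (homOfLE (le_refl p)).op = 𝟙 (op p) from rfl, F.map_id]
  rfl

lemma res_cochain_congr {n : ℕ} (φ : Cochain F n) {c₁ c₂ : ComposableArrows P n} (h : c₁ = c₂)
    {v : P} (h₁ : v ≤ c₁.obj 0) (h₂ : v ≤ c₂.obj 0) : res F h₁ (φ c₁) = res F h₂ (φ c₂) := by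
  subst h; rfl

lemma delta_apply {n : ℕ} (φ : Cochain F n) (c : ComposableArrows P (n + 1)) :
    delta F φ c = ∑ k : Fin (n + 2),
      ((-1 : ℤ) ^ (k : ℕ)) • res F (obj_zero_le_faceChain c k) (φ (faceChain k c)) :=
  rfl

lemma res_delta {n : ℕ} (φ : Cochain F n) (c : ComposableArrows P (n + 1)) {v : P}
    (hv : v ≤ c.obj 0) :
    res F hv (delta F φ c) = ∑ k : Fin (n + 2),
      ((-1 : ℤ) ^ (k : ℕ)) • res F (hv.trans (obj_zero_le_faceChain c k)) (φ (faceChain k c)) := by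
  rw [delta_apply, map_sum]
  refine Finset.sum_congr rfl fun k _ => ?_
  rw [map_zsmul]
  exact congrArg _ (res_res _ _ _)

lemma FunctorSection.res_sec (S : FunctorSection F) {p q : P} (h : p ≤ q) (a : F.obj (op p)) :
    res F h (S.sec h a) = a := by
  rw [res, ← ConcreteCategory.comp_apply, S.is_section]
  rfl

lemma LowerFactoring.exists_res_sec {S : FunctorSection F} (hS : LowerFactoring F S)
    {x y z : P} (hx : x ≤ z) (hy : y ≤ z) :
    ∃ (w : P) (hwx : w ≤ x) (hwy : w ≤ y),
      ∀ a, res F hy (S.sec hx a) = S.sec hwy (res F hwx a) := by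
  obtain ⟨w, hwx, hwy, e⟩ := hS x y z hx hy
  exact ⟨w, hwx, hwy, fun a => ConcreteCategory.congr_hom e a⟩

lemma res_eq_sum_of_delta_eq_zero {n : ℕ} {ψ : Cochain F (n + 1)} (hψ : delta F ψ = 0)
    (c : ComposableArrows P (n + 1)) {p : P} (h : p ≤ c.obj 0) :
    res F h (ψ c) = ∑ k : Fin (n + 2), ((-1 : ℤ) ^ (k : ℕ)) •
      ψ.precompValue (faceChain k c) (h.trans (obj_zero_le_faceChain c k)) := by
  let c' := c.precomp (homOfLE h)
  have hcocycle := res_delta ψ c' (le_refl p)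
  have h₀ := res_cochain_congr ψ (faceChain_zero_precomp c h)
    ((le_refl p).trans (obj_zero_le_faceChain c' 0)) h
  have hsucc (k : Fin (n + 2)) :
      res F ((le_refl p).trans (obj_zero_le_faceChain c' k.succ)) (ψ (faceChain k.succ c')) =
        ψ.precompValue (faceChain k c) (h.trans (obj_zero_le_faceChain c k)) :=
    (res_cochain_congr ψ (faceChain_succ_precomp c h k) _ (le_refl p)).trans (res_refl _)
  rw [hψ, Cochain.zero_apply, map_zero, Fin.sum_univ_succ] at hcocycle
  simp only [hsucc, Fin.val_zero, pow_zero, one_smul, Fin.val_succ, pow_succ, mul_neg_one,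
    neg_smul, Finset.sum_neg_distrib] at hcocycle
  rw [h₀] at hcocycle
  exact add_neg_eq_zero.1 hcocycle.symm

end Restriction

section Contraction

variable {F : Pᵒᵖ ⥤ AddCommGrpCat.{u}}

noncomputable def cone (S : FunctorSection F) (p : P) {n : ℕ} (ψ : Cochain F (n + 1)) :
    Cochain F n := fun c =>
  open Classical in
  if h : p ≤ c.obj 0 then S.sec h (ψ.precompValue c h) else 0

lemma cone_of_le (S : FunctorSection F) {p : P} {n : ℕ} (ψ : Cochain F (n + 1))
    {c : ComposableArrows P n} (h : p ≤ c.obj 0) :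
    cone S p ψ c = S.sec h (ψ.precompValue c h) :=
  dif_pos h

lemma cone_of_not_le (S : FunctorSection F) {p : P} {n : ℕ} (ψ : Cochain F (n + 1))
    {c : ComposableArrows P n} (h : ¬p ≤ c.obj 0) : cone S p ψ c = 0 :=
  dif_neg h

lemma res_delta_cone_self (S : FunctorSection F) {n : ℕ} {ψ : Cochain F (n + 1)}
    (hψ : delta F ψ = 0) (c : ComposableArrows P (n + 1)) {p : P} (h : p ≤ c.obj 0) :
    res F h (delta F (cone S p ψ) c) = res F h (ψ c) := by
  rw [res_delta, res_eq_sum_of_delta_eq_zero hψ c h]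
  refine Finset.sum_congr rfl fun k _ => ?_
  rw [cone_of_le S ψ (h.trans (obj_zero_le_faceChain c k)), S.res_sec]

variable (F) in
def VanishesOn (D : Set P) {n : ℕ} (ψ : Cochain F n) : Prop :=
  ∀ (c : ComposableArrows P n), ∀ v ∈ D, ∀ hv : v ≤ c.obj 0, res F hv (ψ c) = 0

lemma VanishesOn.eq_zero {n : ℕ} {ψ : Cochain F n} (h : VanishesOn F Set.univ ψ) : ψ = 0 :=
  funext fun c => (res_refl _).symm.trans (h c _ trivial le_rfl)

lemma vanishesOn_delta {D : Set P} {n : ℕ} {φ : Cochain F n} (h : VanishesOn F D φ) :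
    VanishesOn F D (delta F φ) := by
  intro c v hvD hv
  rw [res_delta]
  exact Finset.sum_eq_zero fun k _ => by rw [h _ v hvD, smul_zero]

lemma vanishesOn_cone {S : FunctorSection F} (hS : LowerFactoring F S) {D : Set P}
    (hD : IsLowerSet D) (p : P) {n : ℕ} {ψ : Cochain F (n + 1)} (h : VanishesOn F D ψ) :
    VanishesOn F D (cone S p ψ) := by
  intro c v hvD hv
  by_cases hp : p ≤ c.obj 0
  · obtain ⟨w, hwp, hwv, e⟩ := hS.exists_res_sec hp hv
    rw [cone_of_le S ψ hp, e]
    exact (congrArg _ (h (c.precomp (homOfLE hp)) w (hD hwv hvD) hwp)).trans (map_zero _)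
  · rw [cone_of_not_le S ψ hp, map_zero]

lemma vanishesOn_insert_sub_delta_cone {S : FunctorSection F} (hS : LowerFactoring F S)
    {D : Set P} (hD : IsLowerSet D) (p : P) {n : ℕ} {ψ : Cochain F (n + 1)}
    (hψ : delta F ψ = 0) (h : VanishesOn F D ψ) :
    VanishesOn F (insert p D) (ψ - delta F (cone S p ψ)) := by
  rintro c v (rfl | hvD) hv
  · rw [Cochain.sub_apply, map_sub, res_delta_cone_self S hψ, sub_self]
  · rw [Cochain.sub_apply, map_sub, h c v hvD hv,
      vanishesOn_delta (vanishesOn_cone hS hD p h) c v hvD hv, sub_self]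

end Contraction

lemma IsLowerSet.insert_of_minimal {D : Set P} (hD : IsLowerSet D) {p : P}
    (hp : Minimal (· ∉ D) p) : IsLowerSet (insert p D) := by
  rintro a b hba (rfl | ha)
  · by_cases hb : b ∈ D
    · exact Or.inr hb
    · exact Or.inl (hp.eq_of_le hb hba)
  · exact Or.inr (hD hba ha)

theorem exists_delta_eq_of_vanishesOn [Finite P] {F : Pᵒᵖ ⥤ AddCommGrpCat.{u}}
    {S : FunctorSection F} (hS : LowerFactoring F S) (D : Set P) (hD : IsLowerSet D) {n : ℕ}
    (ψ : Cochain F (n + 1)) (hψ : delta F ψ = 0) (h : VanishesOn F D ψ) :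
    ∃ b : Cochain F n, delta F b = ψ := by
  induction D using WellFoundedGT.induction generalizing ψ with
  | _ D ih => ?_
  by_cases hDu : D = Set.univ
  · subst hDu
    exact ⟨0, by rw [delta_zero, h.eq_zero]⟩
  obtain ⟨p, hp⟩ := Dᶜ.toFinite.exists_minimal (Set.nonempty_compl.2 hDu)
  obtain ⟨b, hb⟩ := ih (insert p D) (Set.ssubset_insert hp.prop) (hD.insert_of_minimal hp)
    (ψ - delta F (cone S p ψ)) (by rw [delta_sub, hψ, delta_delta, sub_zero])
    (vanishesOn_insert_sub_delta_cone hS hD p hψ h)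
  exact ⟨b + cone S p ψ, by rw [delta_add, hb, sub_add_cancel]⟩

theorem vanishing_of_lowerFactoring_general
    [Fintype P]
    (F : Pᵒᵖ ⥤ AddCommGrpCat.{u}) (S : FunctorSection F) (hS : LowerFactoring F S) :
    ∀ (n : ℕ) (c : Cochain F (n + 1)), delta F c = 0 → ∃ b : Cochain F n, delta F b = c :=
  fun _ c hc => exists_delta_eq_of_vanishesOn hS ∅ isLowerSet_empty c hc fun _ _ hv => hv.elim

/-- **Theorem (acyclicity).** If `P` is a finite pointed poset and `F : Pᵒᵖ ⥤ Ab` has a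
lower factoring section, then all higher limits of `F` vanish: every `n`-cocycle with
`n > 0` is a coboundary. -/
theorem vanishing_of_lowerFactoring
    [OrderBot P] [Fintype P]
    (F : Pᵒᵖ ⥤ AddCommGrpCat.{u}) (S : FunctorSection F) (hS : LowerFactoring F S) :
    ∀ (n : ℕ) (c : Cochain F (n + 1)), delta F c = 0 → ∃ b : Cochain F n, delta F b = c :=
  vanishing_of_lowerFactoring_general F S hS
end

section
/- Let P be a pointed poset and F : P^op → Ab a functor with a lower factoring section S such that F(*) = 0. Let u ∈ P be a minimal element. Then the assignment F_u(x) = S(ι_{u,x})(F(u)) for x ≥ u and F_u(x) = 0 otherwise, with structure maps the restrictions of those of F, defines a subfunctor F_u ≤ F that is locally constant on P_{≥u} with all structure maps in P_{≥u} isomorphisms onto F(u), and which vanishes outside P_{≥u}. -/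
open CategoryTheory Opposite

universe u

variable {P : Type u} [PartialOrder P]

attribute [local instance] Classical.propDecidable

/-- The subgroup `F_u(q) = S(ι_{u,q})(F(u))` for `q ≥ u`, and `0` otherwise. -/
noncomputable def Fu (F : Pᵒᵖ ⥤ AddCommGrpCat.{u}) (S : FunctorSection F) (u q : P) :
    AddSubgroup (F.obj (op q)) :=
  if h : u ≤ q then AddSubgroup.map (S.sec h).hom ⊤ else ⊥

/-
For an atom `u`, lower factoring applied to `u ≤ q ≥ p` gives a common lower bound `w` of `u`
and `p`, so `w = ⊥` or `w = u`. Hence `F(ι_{p,q}) ∘ S(ι_{u,q})` either factors through `F(⊥) = 0` or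
equals `S(ι_{u,p})`; when `u ≤ p` the first case forces the map to vanish as well, because
`S(ι_{u,q})` is split by `F(ι_{u,q}) = F(ι_{u,p}) ∘ F(ι_{p,q})`. So the restriction of
`F(ι_{p,q})` to the image of `S(ι_{u,q})` is `S(ι_{u,p}) ∘ S(ι_{u,q})⁻¹` if `u ≤ p` and `0`
otherwise, and all claims follow from the injectivity of the section maps.
-/

namespace FunctorSection

variable {F : Pᵒᵖ ⥤ AddCommGrpCat.{u}} (S : FunctorSection F)

lemma map_sec_apply {p q : P} (h : p ≤ q) (a : F.obj (op p)) :
    F.map (homOfLE h).op (S.sec h a) = a := by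
  simpa using ConcreteCategory.congr_hom (S.is_section h) a

lemma sec_injective {p q : P} (h : p ≤ q) : Function.Injective (S.sec h) :=
  Function.LeftInverse.injective (S.map_sec_apply h)

end FunctorSection

lemma map_homOfLE_map_homOfLE_apply (F : Pᵒᵖ ⥤ AddCommGrpCat.{u}) {p q r : P}
    (hpq : p ≤ q) (hqr : q ≤ r) (a : F.obj (op r)) :
    F.map (homOfLE hpq).op (F.map (homOfLE hqr).op a) = F.map (homOfLE (hpq.trans hqr)).op a := by
  rw [← ConcreteCategory.comp_apply, ← F.map_comp]
  rfl

section Fu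

variable {F : Pᵒᵖ ⥤ AddCommGrpCat.{u}} {S : FunctorSection F} {u p q : P}

lemma Fu_of_not_le (h : ¬ u ≤ p) : Fu F S u p = ⊥ := by
  rw [Fu, dif_neg h]

lemma coe_Fu_of_le (h : u ≤ p) : (Fu F S u p : Set (F.obj (op p))) = S.sec h '' Set.univ := by
  rw [Fu, dif_pos h, AddSubgroup.coe_map, AddSubgroup.coe_top]

lemma sec_mem_Fu (h : u ≤ p) (b : F.obj (op u)) : S.sec h b ∈ Fu F S u p := by
  rw [← SetLike.mem_coe, coe_Fu_of_le h]
  exact Set.mem_image_of_mem _ trivial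

lemma bijOn_sec_Fu (h : u ≤ p) : Set.BijOn (S.sec h) Set.univ (Fu F S u p) := by
  rw [coe_Fu_of_le h]
  exact (S.sec_injective h).injOn.bijOn_image

lemma LowerFactoring.map_sec_of_isAtom [OrderBot P] (hS : LowerFactoring F S)
    (hFbot : ∀ a : F.obj (op (⊥ : P)), a = 0) (hu : IsAtom u) (huq : u ≤ q) (hpq : p ≤ q)
    (b : F.obj (op u)) :
    F.map (homOfLE hpq).op (S.sec huq b) = if hup : u ≤ p then S.sec hup b else 0 := by
  obtain ⟨w, hwu, hwp, hfactor⟩ := hS u p q huq hpq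
  have hfactor_apply : F.map (homOfLE hpq).op (S.sec huq b) =
      S.sec hwp (F.map (homOfLE hwu).op b) := ConcreteCategory.congr_hom hfactor b
  rcases hu.le_iff.mp hwu with rfl | rfl
  · have hzero : F.map (homOfLE hpq).op (S.sec huq b) = 0 := by
      rw [hfactor_apply, hFbot (F.map _ b), map_zero]
    split_ifs with hup
    · have hb : b = 0 := by
        simpa only [map_homOfLE_map_homOfLE_apply, S.map_sec_apply, map_zero] using
          congrArg (F.map (homOfLE hup).op) hzero
      rw [hzero, hb, map_zero]
    · exact hzero
  · rw [dif_pos hwp, hfactor_apply, Subsingleton.elim (homOfLE hwu).op (𝟙 _), F.map_id]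
    rfl

variable [OrderBot P] (hS : LowerFactoring F S) (hFbot : ∀ a : F.obj (op (⊥ : P)), a = 0)
  (hu : IsAtom u)
include hS hFbot hu

lemma map_mem_Fu (h : p ≤ q) {a : F.obj (op q)} (ha : a ∈ Fu F S u q) :
    F.map (homOfLE h).op a ∈ Fu F S u p := by
  by_cases huq : u ≤ q
  · obtain ⟨b, -, rfl⟩ := (coe_Fu_of_le huq).le ha
    rw [hS.map_sec_of_isAtom hFbot hu huq h]
    split_ifs with hup
    · exact sec_mem_Fu hup b
    · exact zero_mem _
  · rw [Fu_of_not_le huq, AddSubgroup.mem_bot] at ha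
    rw [ha, map_zero]
    exact zero_mem _

lemma bijOn_map_Fu (h : p ≤ q) (hup : u ≤ p) :
    Set.BijOn (F.map (homOfLE h).op) (Fu F S u q) (Fu F S u p) := by
  have huq : u ≤ q := hup.trans h
  have hcomp : F.map (homOfLE h).op ∘ S.sec huq = S.sec hup := by
    funext b
    simp only [Function.comp_apply, hS.map_sec_of_isAtom hFbot hu huq h, dif_pos hup]
  have hinj : Set.InjOn (F.map (homOfLE h).op ∘ S.sec huq) Set.univ := by
    rw [hcomp]
    exact (S.sec_injective hup).injOn
  rw [coe_Fu_of_le huq, coe_Fu_of_le hup, ← hcomp, Set.image_comp]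
  exact hinj.image_of_comp.bijOn_image

end Fu

/-- **Lemma.** If `F(⊥) = 0` and `S` is a lower factoring section of `F`, then for any
minimal element (atom) `u`, the assignment `F_u` is a subfunctor of `F` that vanishes
outside `P_{≥u}` and is locally constant on `P_{≥u}`, all its values being isomorphic
images of `F(u)` under the section maps. -/
theorem Fu_subfunctor
    [OrderBot P]
    (F : Pᵒᵖ ⥤ AddCommGrpCat.{u}) (S : FunctorSection F) (hS : LowerFactoring F S)
    (hFbot : ∀ a : F.obj (op (⊥ : P)), a = 0)
    (u : P) (hu : IsAtom u) :
    -- `F_u` vanishes outside `P_{≥u}`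
    (∀ q : P, ¬ u ≤ q → Fu F S u q = ⊥) ∧
    -- `F_u` is a subfunctor of `F`: structure maps of `F` restrict to `F_u`
    (∀ (p q : P) (h : p ≤ q), ∀ a ∈ Fu F S u q, F.map (homOfLE h).op a ∈ Fu F S u p) ∧
    -- `F_u` is locally constant on `P_{≥u}`: all structure maps there are isomorphisms
    (∀ (p q : P) (h : p ≤ q), u ≤ p →
      Set.BijOn (F.map (homOfLE h).op) (Fu F S u q) (Fu F S u p)) ∧
    -- each value on `P_{≥u}` is isomorphic to `F(u)` via the section map
    (∀ (p : P) (h : u ≤ p), Set.BijOn (S.sec h) Set.univ (Fu F S u p)) :=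
  ⟨fun _ => Fu_of_not_le,
    fun _ _ h _ => map_mem_Fu hS hFbot hu h,
    fun _ _ h => bijOn_map_Fu hS hFbot hu h,
    fun _ => bijOn_sec_Fu⟩
end
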